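/- arXiv:2405.19191 — 4 statements merged into one kernel-verified Lean document; each statement's English description precedes it below -/
import Mathlib

section
/- Let G be a finite d-regular graph with normalized adjacency (random walk) matrix A, let f : E(G) → {±1} be a signing, and let A^f be the signed matrix with A^f(u,v) = f({u,v})/d for edges and 0 otherwise. Then the multiset of eigenvalues of the random walk matrix of the f-induced 2-lift Ĝ equals the disjoint union (with multiplicities) of the eigenvalues of A and the eigenvalues of A^f. -/
noncomputable section
namespace S1

/-- sign of a Bool as an integer (`true ↦ 1`, `false ↦ -1`). -/
def sgn (b : Bool) : ℤ := if b then 1 else -1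

/-- normalized adjacency (random walk) matrix of a `d`-regular graph -/
def rwMatrix {V : Type*} [Fintype V] [DecidableEq V] (G : SimpleGraph V)
    [DecidableRel G.Adj] (d : ℕ) : Matrix V V ℝ :=
  (d : ℝ)⁻¹ • G.adjMatrix ℝ

/-- the `f`-signed random walk matrix: `f({u,v})/d` on edges, `0` otherwise -/
def signedRW {V : Type*} [Fintype V] [DecidableEq V] (G : SimpleGraph V)
    [DecidableRel G.Adj] (d : ℕ) (f : V → V → ℤ) : Matrix V V ℝ :=
  fun u v => if G.Adj u v then (f u v : ℝ) / (d : ℝ) else 0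

/-- random walk matrix of the `f`-induced 2-lift of `G` (on `V × {±1}`,
`(v,i) ~ (u,j)` iff `{v,u} ∈ E(G)` and `i·j = f({u,v})`). -/
def liftRW {V : Type*} [Fintype V] [DecidableEq V] (G : SimpleGraph V)
    [DecidableRel G.Adj] (d : ℕ) (f : V → V → ℤ) :
    Matrix (V × Bool) (V × Bool) ℝ :=
  fun a b => if G.Adj a.1 b.1 ∧ sgn a.2 * sgn b.2 = f a.1 b.1 then (d : ℝ)⁻¹ else 0

/-! Ordering the vertices of the lift sheet by sheet turns its walk matrix into the block
matrix `[[A⁺, A⁻], [A⁻, A⁺]]`, where `A±` is the walk matrix on the edges of sign `±1`. Then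
`A = A⁺ + A⁻` and `A^f = A⁺ - A⁻`, and conjugating by `[[1, 0], [1, 1]]` makes the block matrix
upper triangular with diagonal blocks `A⁺ + A⁻` and `A⁺ - A⁻`. -/

end S1

open Matrix

theorem Matrix.charpoly_fromBlocks_self {n R : Type*} [Fintype n] [DecidableEq n] [CommRing R]
    (A B : Matrix n n R) :
    (fromBlocks A B B A).charpoly = (A + B).charpoly * (A - B).charpoly := by
  let L : Matrix (n ⊕ n) (n ⊕ n) R := fromBlocks 1 0 (-1) 1
  let U : Matrix (n ⊕ n) (n ⊕ n) R := fromBlocks 1 0 1 1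
  have hUL : U * L = 1 := by simp [U, L, fromBlocks_multiply, fromBlocks_one]
  have htri : L * (fromBlocks A B B A * U) = fromBlocks (A + B) B 0 (A - B) := by
    simp only [U, L, fromBlocks_multiply, Matrix.one_mul, Matrix.mul_one, Matrix.zero_mul,
      Matrix.mul_zero, Matrix.neg_mul]
    congr 1 <;> abel
  rw [← charpoly_fromBlocks_zero₂₁, ← htri, charpoly_mul_comm, Matrix.mul_assoc, hUL,
    Matrix.mul_one]

namespace S1

def sheetEquiv (V : Type*) : V × Bool ≃ V ⊕ V :=
  (Equiv.prodComm V Bool).trans (Equiv.boolProdEquivSum V)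

section

variable {V : Type*} [Fintype V] [DecidableEq V] (G : SimpleGraph V) [DecidableRel G.Adj]
  (d : ℕ) (f : V → V → ℤ)

def rwPartOfSign (s : ℤ) : Matrix V V ℝ :=
  fun u v => if G.Adj u v ∧ s = f u v then (d : ℝ)⁻¹ else 0

theorem reindex_liftRW :
    reindex (sheetEquiv V) (sheetEquiv V) (liftRW G d f) =
      fromBlocks (rwPartOfSign G d f 1) (rwPartOfSign G d f (-1))
        (rwPartOfSign G d f (-1)) (rwPartOfSign G d f 1) := by
  ext (u | u) (v | v) <;>
    simp [liftRW, rwPartOfSign, sgn, sheetEquiv, Equiv.boolProdEquivSum]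

variable {G f}

theorem rwPartOfSign_add (hsign : ∀ u v, G.Adj u v → f u v = 1 ∨ f u v = -1) :
    rwPartOfSign G d f 1 + rwPartOfSign G d f (-1) = rwMatrix G d := by
  ext u v
  by_cases h : G.Adj u v
  · rcases hsign u v h with hf | hf <;> simp [rwPartOfSign, rwMatrix, h, hf]
  · simp [rwPartOfSign, rwMatrix, h]

theorem rwPartOfSign_sub (hsign : ∀ u v, G.Adj u v → f u v = 1 ∨ f u v = -1) :
    rwPartOfSign G d f 1 - rwPartOfSign G d f (-1) = signedRW G d f := by
  ext u v
  by_cases h : G.Adj u v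
  · rcases hsign u v h with hf | hf <;> simp [rwPartOfSign, signedRW, h, hf, div_eq_mul_inv]
  · simp [rwPartOfSign, signedRW, h]

end

theorem lift_charpoly_eq_mul_general {V : Type*} [Fintype V] [DecidableEq V] (G : SimpleGraph V)
    [DecidableRel G.Adj] (d : ℕ) (f : V → V → ℤ)
    (hsign : ∀ u v, G.Adj u v → f u v = 1 ∨ f u v = -1) :
    (liftRW G d f).charpoly = (rwMatrix G d).charpoly * (signedRW G d f).charpoly := by
  rw [← charpoly_reindex (sheetEquiv V), reindex_liftRW, charpoly_fromBlocks_self,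
    rwPartOfSign_add d hsign, rwPartOfSign_sub d hsign]

/-- the eigenvalue multiset of the random walk matrix of the `f`-induced
2-lift is the union, with multiplicities, of the eigenvalues of `A` and of `A^f`;
equivalently the characteristic polynomials multiply. -/
theorem lift_charpoly_eq_mul {V : Type*} [Fintype V] [DecidableEq V] (G : SimpleGraph V)
    [DecidableRel G.Adj] (d : ℕ) (hd : 0 < d) (hreg : G.IsRegularOfDegree d)
    (f : V → V → ℤ) (hsymm : ∀ u v, f u v = f v u)
    (hsign : ∀ u v, G.Adj u v → f u v = 1 ∨ f u v = -1) :
    (liftRW G d f).charpoly = (rwMatrix G d).charpoly * (signedRW G d f).charpoly :=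
  lift_charpoly_eq_mul_general G d f hsign

end S1
end
end

section
/- Let X be a pure k-dimensional simplicial complex that is (d₀, d₁, …, d_{k-1})-regular, and let f : X(k) → {±1} be any signing of the top faces. Then the f-local lift X̂ is (2d₀, 2d₁, …, 2d_{k-2}, d_{k-1})-regular, i.e., every i-face of X̂ with i ≤ k-2 has degree 2d_i and every (k-1)-face of X̂ has degree d_{k-1}. -/
open scoped Classical
noncomputable section

namespace HDX

variable {V W : Type*}

/-- sign of a Bool as an integer (`true ↦ 1`, `false ↦ -1`). -/
def sgn (b : Bool) : ℤ := if b then 1 else -1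

/-- projection forgetting signs -/
def proj [DecidableEq V] (σ : Finset (V × Bool)) : Finset V := σ.image Prod.fst

/-- product of the signs of a decorated face -/
def signF (σ : Finset (V × Bool)) : ℤ := ∏ x ∈ σ, sgn x.2

/-- the `f`-local lift of a `k`-dimensional complex `X` -/
def localLift [Fintype V] [DecidableEq V] (X : Finset (Finset V)) (f : Finset V → ℤ)
    (k : ℕ) : Finset (Finset (V × Bool)) :=
  Finset.univ.filter (fun σ' => proj σ' ∈ X ∧ σ'.card = (proj σ').card ∧
    (σ'.card = k + 1 → signF σ' = f (proj σ')))

/-- the link of a face -/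
def link [DecidableEq W] (X : Finset (Finset W)) (σ : Finset W) : Finset (Finset W) :=
  (X.filter (fun τ => σ ⊆ τ)).image (fun τ => τ \ σ)

/-- degree of a face: the number of faces of one higher dimension containing it -/
def deg [DecidableEq W] (X : Finset (Finset W)) (σ : Finset W) : ℕ :=
  (X.filter (fun τ => σ ⊆ τ ∧ τ.card = σ.card + 1)).card

/-- a simplicial complex: downward closed (to nonempty subsets) -/
def DownwardClosed (X : Finset (Finset W)) : Prop :=
  ∀ τ ∈ X, ∀ σ : Finset W, σ ⊆ τ → σ.Nonempty → σ ∈ X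

/-- pure `k`-dimensional -/
def Pure (X : Finset (Finset W)) (k : ℕ) : Prop :=
  (∀ τ ∈ X, τ.card ≤ k + 1) ∧ ∀ τ ∈ X, ∃ ρ ∈ X, τ ⊆ ρ ∧ ρ.card = k + 1

/-- `(d 0, …, d (k-1))`-regular -/
def Regular (X : Finset (Finset W)) (k : ℕ) (d : ℕ → ℕ) : Prop :=
  ∀ i < k, ∀ σ ∈ X, σ.card = i + 1 → deg X σ = d i

/-- the vertices of the link of `σ` -/
def linkVert [DecidableEq W] (X : Finset (Finset W)) (σ : Finset W) : Type _ :=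
  {v : W // {v} ∈ link X σ}

instance [Fintype W] [DecidableEq W] (X : Finset (Finset W)) (σ : Finset W) :
    Fintype (linkVert X σ) := Subtype.fintype _

instance [DecidableEq W] (X : Finset (Finset W)) (σ : Finset W) :
    DecidableEq (linkVert X σ) := Subtype.instDecidableEq

/-- random walk matrix of the 1-skeleton of the link of `σ`, normalized by `dreg` -/
def linkRW [Fintype W] [DecidableEq W] (X : Finset (Finset W)) (σ : Finset W) (dreg : ℕ) :
    Matrix (linkVert X σ) (linkVert X σ) ℝ :=
  fun u w => if u.1 ≠ w.1 ∧ {u.1, w.1} ∈ link X σ then (dreg : ℝ)⁻¹ else 0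

/-- signed random walk matrix of the 1-skeleton of the link of `σ` -/
def linkRWSigned [Fintype W] [DecidableEq W] (X : Finset (Finset W)) (σ : Finset W)
    (dreg : ℕ) (g : Finset W → ℤ) : Matrix (linkVert X σ) (linkVert X σ) ℝ :=
  fun u w => if u.1 ≠ w.1 ∧ {u.1, w.1} ∈ link X σ then (g {u.1, w.1} : ℝ) / (dreg : ℝ) else 0

/-- largest absolute value of the eigenvalues other than (one copy of) the trivial
eigenvalue `1`, of a matrix: computed via the roots of the characteristic polynomial. -/
def lam {n : Type*} [Fintype n] [DecidableEq n] (M : Matrix n n ℝ) : ℝ :=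
  (((M.charpoly.roots).erase 1).map (fun x => |x|)).fold max 0

/-- `λ`-two sided high dimensional expander (links normalized by their regular degrees) -/
def IsHDX [Fintype W] [DecidableEq W] (X : Finset (Finset W)) (k : ℕ) (d : ℕ → ℕ)
    (l : ℝ) : Prop :=
  ∀ σ : Finset W, (σ = ∅ ∨ σ ∈ X) → σ.card ≤ k - 1 → lam (linkRW X σ (d σ.card)) ≤ l

/-- the ordered pairs in `S × T` that form an edge of the link of `σ` -/
def pairs [DecidableEq W] (X : Finset (Finset W)) (σ : Finset W) (S T : Finset W) :
    Finset (W × W) :=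
  (S ×ˢ T).filter (fun p => p.1 ≠ p.2 ∧ {p.1, p.2} ∈ link X σ)

/-- `⟨1_S, A_σ 1_T⟩` for the random walk matrix of the link of `σ` -/
def innerRW [DecidableEq W] (X : Finset (Finset W)) (σ : Finset W) (dtop : ℕ)
    (S T : Finset W) : ℝ :=
  ((pairs X σ S T).card : ℝ) / (dtop : ℝ)

/-- `⟨1_S, A_σ^g 1_T⟩` for the `g`-signed random walk matrix of the link of `σ` -/
def innerRWSigned [DecidableEq W] (X : Finset (Finset W)) (σ : Finset W) (dtop : ℕ)
    (g : Finset W → ℤ) (S T : Finset W) : ℝ :=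
  (∑ p ∈ pairs X σ S T, (g {p.1, p.2} : ℝ)) / (dtop : ℝ)

/-- `(β, t)`-sparseness -/
def IsSparse [Fintype W] [DecidableEq W] (X : Finset (Finset W)) (k dtop : ℕ)
    (β t : ℝ) : Prop :=
  ∀ σ ∈ X, σ.card = k - 1 → ∀ S T : Finset W,
    (∀ v ∈ S ∪ T, {v} ∈ link X σ) → ((S ∪ T).card : ℝ) ≤ t →
    innerRW X σ dtop S T ≤ β * Real.sqrt ((S.card : ℝ) * (T.card : ℝ))

lemma sgn_true : sgn true = 1 := rfl
lemma sgn_false : sgn false = -1 := rfl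

lemma signF_mul_self (σ : Finset (V × Bool)) : signF σ * signF σ = 1 := by
  unfold signF
  rw [← Finset.prod_mul_distrib]
  apply Finset.prod_eq_one
  intro x _
  cases x.2 <;> simp [sgn]

lemma deg_eq_card_verts [Fintype V] [DecidableEq V] (X : Finset (Finset V)) (σ : Finset V) :
    deg X σ = (Finset.univ.filter (fun v => v ∉ σ ∧ insert v σ ∈ X)).card := by
  unfold deg
  symm
  apply Finset.card_bij (fun v _ => insert v σ)
  · intro v hv
    simp only [Finset.mem_filter, Finset.mem_univ, true_and] at hv
    simp [Finset.mem_filter, hv.2, Finset.subset_insert,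
      Finset.card_insert_of_notMem hv.1]
  · intro v hv w hw h
    simp only [Finset.mem_filter, Finset.mem_univ, true_and] at hv hw
    have : v ∈ insert w σ := h ▸ Finset.mem_insert_self v σ
    rcases Finset.mem_insert.mp this with h' | h'
    · exact h'
    · exact absurd h' hv.1
  · intro τ hτ
    simp only [Finset.mem_filter] at hτ
    obtain ⟨hX, hsub, hcard⟩ := hτ
    obtain ⟨v, hv⟩ : (τ \ σ).Nonempty := by
      rw [← Finset.card_pos, Finset.card_sdiff_of_subset hsub]; omega
    rw [Finset.mem_sdiff] at hv
    have hτeq : τ = insert v σ :=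
      (Finset.eq_of_subset_of_card_le (Finset.insert_subset hv.1 hsub)
        (by rw [Finset.card_insert_of_notMem hv.2]; omega)).symm
    refine ⟨v, ?_, hτeq.symm⟩
    simp only [Finset.mem_filter, Finset.mem_univ, true_and]
    exact ⟨hv.2, hτeq ▸ hX⟩

lemma deg_irrel (i1 i2 : DecidableEq W) (X : Finset (Finset W)) (σ : Finset W) :
    @deg W i1 X σ = @deg W i2 X σ := by
  rw [Subsingleton.elim i1 i2]

lemma mem_localLift [Fintype V] [DecidableEq V] {X : Finset (Finset V)} {f : Finset V → ℤ}
    {k : ℕ} {σ' : Finset (V × Bool)} :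
    σ' ∈ localLift X f k ↔ proj σ' ∈ X ∧ σ'.card = (proj σ').card ∧
      (σ'.card = k + 1 → signF σ' = f (proj σ')) := by
  simp [localLift]

/-- the `f`-local lift of a pure `(d₀,…,d_{k-1})`-regular
`k`-dimensional complex is `(2d₀,…,2d_{k-2},d_{k-1})`-regular. -/
theorem localLift_regular {V : Type*} [Fintype V] [DecidableEq V] (k : ℕ) (hk : 1 ≤ k)
    (X : Finset (Finset V)) (hdc : DownwardClosed X) (hpure : Pure X k)
    (d : ℕ → ℕ) (hreg : Regular X k d)
    (f : Finset V → ℤ) (hf : ∀ τ, f τ = 1 ∨ f τ = -1) :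
    (∀ σ' ∈ localLift X f k, σ'.Nonempty → σ'.card ≤ k - 1 →
      deg (localLift X f k) σ' = 2 * d (σ'.card - 1)) ∧
    (∀ σ' ∈ localLift X f k, σ'.card = k →
      deg (localLift X f k) σ' = d (k - 1)) := by
  constructor
  · -- low-dimensional faces: degree doubles
    intro σ' hσ' hne hle
    obtain ⟨hσX, hσcard, -⟩ := mem_localLift.mp hσ'
    set σ := proj σ' with hσdef
    have hcard1 : 1 ≤ σ'.card := Finset.card_pos.mpr hne
    have hdeg : deg X σ = d (σ'.card - 1) :=
      (deg_irrel _ _ X σ).trans (hreg (σ'.card - 1) (by omega) σ hσX (by omega))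
    rw [deg_eq_card_verts] at hdeg
    unfold deg
    rw [← hdeg]
    have h2 : (Finset.univ.filter (fun v => v ∉ σ ∧ insert v σ ∈ X)).card * 2 =
        ((Finset.univ.filter (fun v => v ∉ σ ∧ insert v σ ∈ X)) ×ˢ
          (Finset.univ : Finset Bool)).card := by
      rw [Finset.card_product, Finset.card_univ, Fintype.card_bool]
    rw [mul_comm, h2]
    symm
    apply Finset.card_bij (fun p _ => insert p σ')
    · rintro ⟨v, b⟩ hp
      simp only [Finset.mem_product, Finset.mem_filter, Finset.mem_univ, true_and] at hp
      obtain ⟨hvσ, hvX⟩ := hp.1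
      have hnm : (v, b) ∉ σ' := fun h => hvσ (Finset.mem_image_of_mem Prod.fst h)
      have hproj : proj (insert (v, b) σ') = insert v σ := by
        simp [proj, Finset.image_insert, hσdef]
      simp only [Finset.mem_filter]
      refine ⟨mem_localLift.mpr ⟨?_, ?_, ?_⟩, Finset.subset_insert _ _, ?_⟩
      · rw [hproj]; exact hvX
      · rw [hproj, Finset.card_insert_of_notMem hnm, Finset.card_insert_of_notMem hvσ]
        omega
      · intro hc
        rw [Finset.card_insert_of_notMem hnm] at hc
        omega
      · exact Finset.card_insert_of_notMem hnm
    · rintro ⟨v, b⟩ hp ⟨w, c⟩ hq h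
      simp only [Finset.mem_product, Finset.mem_filter, Finset.mem_univ, true_and] at hp hq
      have hnm : (v, b) ∉ σ' := fun h => hp.1.1 (Finset.mem_image_of_mem Prod.fst h)
      have : (v, b) ∈ insert (w, c) σ' := h ▸ Finset.mem_insert_self _ _
      rcases Finset.mem_insert.mp this with h' | h'
      · exact h'
      · exact absurd h' hnm
    · intro τ' hτ'
      simp only [Finset.mem_filter] at hτ'
      obtain ⟨hτL, hsub, hcard⟩ := hτ'
      obtain ⟨hτX, hτcard, -⟩ := mem_localLift.mp hτL
      obtain ⟨p, hpmem⟩ : (τ' \ σ').Nonempty := by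
        rw [← Finset.card_pos, Finset.card_sdiff_of_subset hsub]; omega
      rw [Finset.mem_sdiff] at hpmem
      obtain ⟨v, b⟩ := p
      have hτeq : τ' = insert (v, b) σ' :=
        (Finset.eq_of_subset_of_card_le (Finset.insert_subset hpmem.1 hsub)
          (by rw [Finset.card_insert_of_notMem hpmem.2]; omega)).symm
      have hproj : proj τ' = insert v σ := by
        rw [hτeq]; simp [proj, Finset.image_insert, hσdef]
      have hvσ : v ∉ σ := by
        intro hv
        have : insert v σ = σ := Finset.insert_eq_self.mpr hv
        rw [hproj, this] at hτcard
        omega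
      refine ⟨(v, b), ?_, hτeq.symm⟩
      simp only [Finset.mem_product, Finset.mem_filter, Finset.mem_univ, true_and, and_true]
      exact ⟨hvσ, hproj ▸ hτX⟩
  · -- top faces: degree stays
    intro σ' hσ' hkcard
    obtain ⟨hσX, hσcard, -⟩ := mem_localLift.mp hσ'
    set σ := proj σ' with hσdef
    have hdeg : deg X σ = d (k - 1) :=
      (deg_irrel _ _ X σ).trans (hreg (k - 1) (by omega) σ hσX (by omega))
    rw [deg_eq_card_verts] at hdeg
    unfold deg
    rw [← hdeg]
    symm
    have hs2 : signF σ' * signF σ' = 1 := signF_mul_self σ'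
    apply Finset.card_bij
      (fun v _ => insert (v, if f (insert v σ) = signF σ' then true else false) σ')
    · intro v hv
      simp only [Finset.mem_filter, Finset.mem_univ, true_and] at hv
      obtain ⟨hvσ, hvX⟩ := hv
      set b := if f (insert v σ) = signF σ' then true else false with hbdef
      have hnm : (v, b) ∉ σ' := fun h => hvσ (Finset.mem_image_of_mem Prod.fst h)
      have hproj : proj (insert (v, b) σ') = insert v σ := by
        simp [proj, Finset.image_insert, hσdef]
      simp only [Finset.mem_filter]
      refine ⟨mem_localLift.mpr ⟨?_, ?_, ?_⟩, Finset.subset_insert _ _, ?_⟩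
      · rw [hproj]; exact hvX
      · rw [hproj, Finset.card_insert_of_notMem hnm, Finset.card_insert_of_notMem hvσ]
        omega
      · intro _
        rw [hproj]
        have hsF : signF (insert (v, b) σ') = sgn b * signF σ' := by
          unfold signF
          rw [Finset.prod_insert hnm]
        rw [hsF, hbdef]
        split_ifs with hcase
        · rw [sgn_true, one_mul, hcase]
        · rw [sgn_false]
          rcases hf (insert v σ) with h1 | h1 <;>
            rcases mul_self_eq_one_iff.mp hs2 with h2 | h2 <;>
            rw [h1, h2] at hcase ⊢ <;> omega
      · exact Finset.card_insert_of_notMem hnm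
    · intro v hv w hw h
      simp only [Finset.mem_filter, Finset.mem_univ, true_and] at hv hw
      have hnm : (v, if f (insert v σ) = signF σ' then true else false) ∉ σ' :=
        fun h => hv.1 (Finset.mem_image_of_mem Prod.fst h)
      have hmem : (v, if f (insert v σ) = signF σ' then true else false) ∈
          insert (w, if f (insert w σ) = signF σ' then true else false) σ' :=
        h ▸ Finset.mem_insert_self _ _
      rcases Finset.mem_insert.mp hmem with h' | h'
      · exact congrArg Prod.fst h'
      · exact absurd h' hnm
    · intro τ' hτ'
      simp only [Finset.mem_filter] at hτ'
      obtain ⟨hτL, hsub, hcard⟩ := hτ'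
      obtain ⟨hτX, hτcard, hτsign⟩ := mem_localLift.mp hτL
      obtain ⟨p, hpmem⟩ : (τ' \ σ').Nonempty := by
        rw [← Finset.card_pos, Finset.card_sdiff_of_subset hsub]; omega
      rw [Finset.mem_sdiff] at hpmem
      obtain ⟨v, b⟩ := p
      have hτeq : τ' = insert (v, b) σ' :=
        (Finset.eq_of_subset_of_card_le (Finset.insert_subset hpmem.1 hsub)
          (by rw [Finset.card_insert_of_notMem hpmem.2]; omega)).symm
      have hproj : proj τ' = insert v σ := by
        rw [hτeq]; simp [proj, Finset.image_insert, hσdef]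
      have hvσ : v ∉ σ := by
        intro hv
        have : insert v σ = σ := Finset.insert_eq_self.mpr hv
        rw [hproj, this] at hτcard
        omega
      have hsigneq : signF τ' = f (insert v σ) := by
        rw [← hproj]
        exact hτsign (by omega)
      have hsF : signF τ' = sgn b * signF σ' := by
        rw [hτeq]
        unfold signF
        rw [Finset.prod_insert hpmem.2]
      have hbeq : b = if f (insert v σ) = signF σ' then true else false := by
        rw [← hsigneq, hsF]
        split_ifs with hcase
        · -- sgn b * s = s, so b = true
          cases b
          · exfalso
            rw [sgn_false] at hcase
            rcases mul_self_eq_one_iff.mp hs2 with h2 | h2 <;> rw [h2] at hcase <;> omega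
          · rfl
        · cases b
          · rfl
          · exact absurd (by rw [sgn_true, one_mul]) hcase
      refine ⟨v, ?_, by rw [← hbeq, ← hτeq]⟩
      simp only [Finset.mem_filter, Finset.mem_univ, true_and]
      exact ⟨hvσ, hproj ▸ hτX⟩

end HDX
end
end

section
/- Let X be a pure k-dimensional simplicial complex, f : X(k) → {±1}, and X̂ the f-local lift. For every (k-2)-face σ̂ ∈ X̂(k-2) with σ = π(σ̂), the link X̂_{σ̂} is isomorphic to the 2-lift of the 1-skeleton of X_σ induced by the edge signing f_{σ̂}(e) = sign(σ̂)·f(σ ∪ e), where sign(σ̂) = ∏_{v^j ∈ σ̂} j. -/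
open scoped Classical
noncomputable section

namespace HDX

variable {V W : Type*}

/-!
A decorated set `ρ` extends a face `σ'` of the lift to a face iff its vertices are distinct
from each other and from those of `σ'`, its projection extends `π(σ')` to a face of `X`, and,
when `σ' ∪ ρ` is top-dimensional, `sign(σ') · sign(ρ) = f(π(σ') ∪ π(ρ))`. For `|σ'| = k - 1`
the sign condition is vacuous for vertices and, for an edge `{v^i, u^j}`, reads `ij = f_{σ'}(vu)`.
-/

lemma mem_link_iff [DecidableEq W] {X : Finset (Finset W)} {σ ρ : Finset W} :
    ρ ∈ link X σ ↔ Disjoint σ ρ ∧ σ ∪ ρ ∈ X := by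
  simp only [link, Finset.mem_image, Finset.mem_filter]
  constructor
  · rintro ⟨τ, ⟨hτ, hστ⟩, rfl⟩
    exact ⟨Finset.disjoint_sdiff, by rwa [Finset.union_sdiff_of_subset hστ]⟩
  · rintro ⟨hd, hX⟩
    exact ⟨σ ∪ ρ, ⟨hX, Finset.subset_union_left⟩, Finset.union_sdiff_cancel_left hd⟩

lemma Finset.disjoint_and_injOn_union_iff {α β : Type*} [DecidableEq α] [DecidableEq β]
    {g : α → β} {s t : Finset α} :
    Disjoint s t ∧ Set.InjOn g ↑(s ∪ t) ↔
      Disjoint (s.image g) (t.image g) ∧ Set.InjOn g s ∧ Set.InjOn g t := by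
  constructor
  · rintro ⟨hst, hinj⟩
    rw [Finset.coe_union, Set.injOn_union (Finset.disjoint_coe.mpr hst)] at hinj
    obtain ⟨hs, ht, hne⟩ := hinj
    refine ⟨Finset.disjoint_left.mpr ?_, hs, ht⟩
    simp only [Finset.mem_image]
    rintro _ ⟨x, hx, rfl⟩ ⟨y, hy, hyx⟩
    exact hne x hx y hy hyx.symm
  · rintro ⟨himg, hs, ht⟩
    have hst : Disjoint s t := himg.of_image_finset
    refine ⟨hst, ?_⟩
    rw [Finset.coe_union, Set.injOn_union (Finset.disjoint_coe.mpr hst)]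
    exact ⟨hs, ht, fun x hx y hy hxy => Finset.disjoint_left.mp himg
      (Finset.mem_image_of_mem g hx) (hxy ▸ Finset.mem_image_of_mem g hy)⟩

lemma proj_union [DecidableEq V] (σ ρ : Finset (V × Bool)) :
    proj (σ ∪ ρ) = proj σ ∪ proj ρ :=
  Finset.image_union _ _

lemma signF_union [DecidableEq V] {σ ρ : Finset (V × Bool)} (h : Disjoint σ ρ) :
    signF (σ ∪ ρ) = signF σ * signF ρ :=
  Finset.prod_union h

lemma signF_pair [DecidableEq V] {v u : V} (i j : Bool) (hvu : v ≠ u) :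
    signF {(v, i), (u, j)} = sgn i * sgn j :=
  Finset.prod_pair fun h => hvu (congrArg Prod.fst h)

lemma signF_mul_eq_iff (σ : Finset (V × Bool)) {x y : ℤ} :
    signF σ * x = y ↔ x = signF σ * y := by
  constructor <;> rintro rfl <;> rw [← mul_assoc, signF_mul_self, one_mul]

section LocalLift

variable [Fintype V] [DecidableEq V] {X : Finset (Finset V)} {f : Finset V → ℤ} {k : ℕ}

lemma mem_localLift_iff {σ : Finset (V × Bool)} :
    σ ∈ localLift X f k ↔ proj σ ∈ X ∧ Set.InjOn Prod.fst (σ : Set (V × Bool)) ∧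
      (σ.card = k + 1 → signF σ = f (proj σ)) := by
  rw [localLift, Finset.mem_filter, proj, eq_comm (a := σ.card) (b := (σ.image _).card),
    Finset.card_image_iff]
  exact ⟨And.right, And.intro (Finset.mem_univ σ)⟩

lemma mem_link_localLift_iff {σ ρ : Finset (V × Bool)}
    (hσ : Set.InjOn Prod.fst (σ : Set (V × Bool))) :
    ρ ∈ link (localLift X f k) σ ↔
      Disjoint (proj σ) (proj ρ) ∧ Set.InjOn Prod.fst (ρ : Set (V × Bool)) ∧
        proj σ ∪ proj ρ ∈ X ∧
        (σ.card + ρ.card = k + 1 → signF σ * signF ρ = f (proj σ ∪ proj ρ)) := by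
  rw [mem_link_iff, mem_localLift_iff, proj_union]
  constructor
  · rintro ⟨hd, hX, hinj, hsign⟩
    obtain ⟨hdp, -, hρ⟩ := Finset.disjoint_and_injOn_union_iff.mp ⟨hd, hinj⟩
    rw [Finset.card_union_of_disjoint hd, signF_union hd] at hsign
    exact ⟨hdp, hρ, hX, hsign⟩
  · rintro ⟨hdp, hρ, hX, hsign⟩
    obtain ⟨hd, hinj⟩ := Finset.disjoint_and_injOn_union_iff.mpr ⟨hdp, hσ, hρ⟩
    rw [← Finset.card_union_of_disjoint hd, ← signF_union hd] at hsign
    exact ⟨hd, hX, hinj, hsign⟩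

end LocalLift

theorem localLift_link_is_lift_general {V : Type*} [Fintype V] [DecidableEq V]
    (k : ℕ) (hk : 2 ≤ k) (X : Finset (Finset V)) (f : Finset V → ℤ)
    (σ' : Finset (V × Bool)) (hmem : σ' ∈ localLift X f k) (hdim : σ'.card = k - 1) :
    (∀ (v : V) (i : Bool),
      ({(v, i)} : Finset (V × Bool)) ∈ link (localLift X f k) σ' ↔
        ({v} : Finset V) ∈ link X (proj σ')) ∧
    (∀ (v u : V) (i j : Bool), v ≠ u →
      (({(v, i), (u, j)} : Finset (V × Bool)) ∈ link (localLift X f k) σ' ↔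
        (({v, u} : Finset V) ∈ link X (proj σ') ∧
          sgn i * sgn j = signF σ' * f (proj σ' ∪ {v, u})))) ∧
    (∀ (v : V) (i j : Bool), i ≠ j →
      ({(v, i), (v, j)} : Finset (V × Bool)) ∉ link (localLift X f k) σ') := by
  obtain ⟨-, hσ', -⟩ := mem_localLift_iff.mp hmem
  refine ⟨fun v i => ?_, fun v u i j hvu => ?_, fun v i j hij hlink => ?_⟩
  · have hcard : σ'.card + ({(v, i)} : Finset (V × Bool)).card ≠ k + 1 := by
      rw [Finset.card_singleton]; omega
    have hproj : proj {(v, i)} = {v} := Finset.image_singleton _ _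
    rw [mem_link_localLift_iff hσ', mem_link_iff, hproj]
    simp only [Finset.coe_singleton, Set.injOn_singleton, hcard, false_implies, true_and,
      and_true]
  · have hcard : σ'.card + ({(v, i), (u, j)} : Finset (V × Bool)).card = k + 1 := by
      rw [Finset.card_pair fun h => hvu (congrArg Prod.fst h)]; omega
    have hproj : proj {(v, i), (u, j)} = {v, u} := by simp [proj]
    rw [mem_link_localLift_iff hσ', mem_link_iff, hproj, signF_pair i j hvu,
      signF_mul_eq_iff]
    simp only [Finset.coe_pair, Set.injOn_pair, hvu, false_implies, hcard, true_implies,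
      true_and, and_assoc]
  · have hinj := ((mem_link_localLift_iff hσ').mp hlink).2.1
    rw [Finset.coe_pair, Set.injOn_pair] at hinj
    exact hij (congrArg Prod.snd (hinj rfl))

/-- for a `(k-2)`-face `σ'` of the `f`-local lift (so `|σ'| = k-1`)
with `σ = π(σ')`, the link of `σ'` in the lift is isomorphic (via the identity on
underlying data) to the 2-lift of the 1-skeleton of the link `X_σ` induced by the
edge signing `f_{σ'}(e) = sign(σ')·f(σ ∪ e)`: both signed copies of each link vertex
appear, and `{(v,i),(u,j)}` is an edge iff `{v,u}` is an edge of `X_σ` and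
`sgn i · sgn j = sign(σ')·f(σ ∪ {v,u})`. -/
theorem localLift_link_is_lift {V : Type*} [Fintype V] [DecidableEq V]
    (k : ℕ) (hk : 2 ≤ k) (X : Finset (Finset V)) (hdc : DownwardClosed X)
    (hpure : Pure X k) (f : Finset V → ℤ) (hf : ∀ τ, f τ = 1 ∨ f τ = -1)
    (σ' : Finset (V × Bool)) (hmem : σ' ∈ localLift X f k) (hdim : σ'.card = k - 1) :
    (∀ (v : V) (i : Bool),
      ({(v, i)} : Finset (V × Bool)) ∈ link (localLift X f k) σ' ↔
        ({v} : Finset V) ∈ link X (proj σ')) ∧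
    (∀ (v u : V) (i j : Bool), v ≠ u →
      (({(v, i), (u, j)} : Finset (V × Bool)) ∈ link (localLift X f k) σ' ↔
        (({v, u} : Finset V) ∈ link X (proj σ') ∧
          sgn i * sgn j = signF σ' * f (proj σ' ∪ {v, u})))) ∧
    (∀ (v : V) (i j : Bool), i ≠ j →
      ({(v, i), (v, j)} : Finset (V × Bool)) ∉ link (localLift X f k) σ') :=
  localLift_link_is_lift_general k hk X f σ' hmem hdim

end HDX
end
end

section
/- Let X be a pure k-dimensional (d₀,…,d_{k-1})-regular simplicial complex, σ ∈ X(k-2), and S, T ⊆ X_σ(0) disjoint with |S| ≥ |T|. If f assigns i.i.d. uniform ±1 signs to the k-faces of X, then the probability that |⟨1_S, A_σ^{f_σ} 1_T⟩| > 10·√((k² log d_{k-1} / d_{k-1})·|S|·|T|) is at most 2·exp(−25·k²·(ln d_{k-1})·|S ∪ T|), which is at most d_{k-1}^{−10·|S∪T|·k²}. -/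
open scoped Classical
noncomputable section

namespace HDX

variable {V W : Type*}

/-- the top-dimensional faces of `X` -/
def TopFaces {V : Type*} (X : Finset (Finset V)) (k : ℕ) : Type _ :=
  {τ : Finset V // τ ∈ X ∧ τ.card = k + 1}

instance {V : Type*} [Fintype V] (X : Finset (Finset V)) (k : ℕ) :
    Fintype (TopFaces X k) := Subtype.fintype _

instance {V : Type*} [DecidableEq V] (X : Finset (Finset V)) (k : ℕ) :
    DecidableEq (TopFaces X k) := Subtype.instDecidableEq

/-- the ±1 value that a sample point `ω` (one fair coin per `k`-face) assigns to a
`k`-face (junk value `1` off the `k`-faces) -/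
def fval {V : Type*} [Fintype V] [DecidableEq V] (X : Finset (Finset V)) (k : ℕ)
    (ω : TopFaces X k → Bool) (τ : Finset V) : ℤ :=
  if h : τ ∈ X ∧ τ.card = k + 1 then sgn (ω ⟨τ, h⟩) else 1

/-- `⟨1_S, A_σ^{f_σ} 1_T⟩` for the random signing determined by `ω` -/
def innerOmega {V : Type*} [Fintype V] [DecidableEq V] (X : Finset (Finset V))
    (k : ℕ) (σ : Finset V) (dtop : ℕ) (S T : Finset V) (ω : TopFaces X k → Bool) : ℝ :=
  (∑ p ∈ pairs X σ S T, (fval X k ω (σ ∪ {p.1, p.2}) : ℝ)) / (dtop : ℝ)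

/-!
Summed over the edges `uv` of `X_σ` between `S` and `T`, `d · ⟨1_S, A_σ^{f_σ} 1_T⟩` is a sum of
independent uniform signs `f(σ ∪ {u, v})`: distinct edges give distinct `k`-faces because `S` and
`T` are disjoint, and regularity at the `(k-1)`-faces `σ ∪ {t}` bounds their number by `d |T|`.
For `n` independent signs the moment generating function is exactly `cosh t ^ n ≤ exp (n t² / 2)`,
so Markov's inequality gives the tail `2 exp (-λ² / (2 d |T|))` at `λ = d · 10 √(…)`, whose exponent
`50 k² log₂ d |S|` dominates `25 k² ln d |S ∪ T|` as `|T| ≤ |S|`.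
-/

section Rademacher

variable {I : Type*} [Fintype I] [DecidableEq I]

theorem sum_exp_mul_sum_sgn (F : Finset I) (t : ℝ) :
    ∑ ω : I → Bool, Real.exp (t * ∑ i ∈ F, (sgn (ω i) : ℝ)) =
      2 ^ Fintype.card I * Real.cosh t ^ F.card := by
  have hfactor : ∀ ω : I → Bool, Real.exp (t * ∑ i ∈ F, (sgn (ω i) : ℝ)) =
      ∏ i, if i ∈ F then Real.exp (t * sgn (ω i)) else 1 := by
    intro ω
    rw [Finset.mul_sum, Real.exp_sum, Fintype.prod_ite_mem]
  have hcoord : ∀ i, ∑ b : Bool, (if i ∈ F then Real.exp (t * sgn b) else 1) =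
      2 * if i ∈ F then Real.cosh t else 1 := by
    intro i
    split_ifs
    · simp only [Fintype.sum_bool, sgn]; push_cast; rw [Real.cosh_eq]; ring_nf
    · simp only [Finset.sum_const, Finset.card_univ, Fintype.card_bool]; norm_num
  simp_rw [hfactor]
  rw [← Fintype.prod_sum (fun i (b : Bool) => if i ∈ F then Real.exp (t * sgn b) else 1)]
  simp_rw [hcoord, Finset.prod_mul_distrib, Fintype.prod_ite_mem,
    Finset.prod_const, Finset.card_univ]

theorem sum_exp_mul_abs_sum_sgn_le (F : Finset I) (t : ℝ) :
    ∑ ω : I → Bool, Real.exp (t * |∑ i ∈ F, (sgn (ω i) : ℝ)|) ≤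
      2 * 2 ^ Fintype.card I * Real.exp (t ^ 2 / 2) ^ F.card := by
  have hpoint : ∀ x : ℝ, Real.exp (t * |x|) ≤ Real.exp (t * x) + Real.exp (-t * x) := by
    intro x
    rcases abs_choice x with h | h <;> rw [h] <;> simp [(Real.exp_pos _).le]
  calc _ ≤ ∑ ω : I → Bool, (Real.exp (t * ∑ i ∈ F, (sgn (ω i) : ℝ)) +
          Real.exp (-t * ∑ i ∈ F, (sgn (ω i) : ℝ))) :=
        Finset.sum_le_sum fun ω _ => hpoint _
    _ = 2 * 2 ^ Fintype.card I * Real.cosh t ^ F.card := by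
        rw [Finset.sum_add_distrib, sum_exp_mul_sum_sgn, sum_exp_mul_sum_sgn, Real.cosh_neg]
        ring
    _ ≤ _ := by gcongr; exact Real.cosh_le_exp_half_sq t

theorem card_lt_abs_sum_sgn_div_le (F : Finset I) {a n : ℝ} (ha : 0 ≤ a)
    (hn : (F.card : ℝ) ≤ n) :
    ((Finset.univ.filter fun ω : I → Bool => a < |∑ i ∈ F, (sgn (ω i) : ℝ)|).card : ℝ) /
        Fintype.card (I → Bool) ≤ 2 * Real.exp (-(a ^ 2 / (2 * n))) := by
  set E := Finset.univ.filter fun ω : I → Bool => a < |∑ i ∈ F, (sgn (ω i) : ℝ)|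
  have hN : (Fintype.card (I → Bool) : ℝ) = 2 ^ Fintype.card I := by simp
  rcases (hn.trans' (Nat.cast_nonneg _)).eq_or_lt with rfl | hn0
  · calc _ ≤ (1 : ℝ) := div_le_one_of_le₀ (by exact_mod_cast E.card_le_univ) (Nat.cast_nonneg _)
      _ ≤ _ := by norm_num
  -- Markov's inequality for `exp (t * |∑|)` at the optimal `t = a / n`
  set t := a / n
  have ht : 0 ≤ t := div_nonneg ha hn0.le
  have hmarkov : E.card * Real.exp (t * a) ≤
      ∑ ω : I → Bool, Real.exp (t * |∑ i ∈ F, (sgn (ω i) : ℝ)|) := by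
    calc E.card * Real.exp (t * a) = E.card • Real.exp (t * a) := (nsmul_eq_mul _ _).symm
      _ ≤ ∑ ω ∈ E, Real.exp (t * |∑ i ∈ F, (sgn (ω i) : ℝ)|) :=
          Finset.card_nsmul_le_sum _ _ _ fun ω hω =>
            Real.exp_le_exp.2 (by gcongr; exact (Finset.mem_filter.1 hω).2.le)
      _ ≤ _ := Finset.sum_le_sum_of_subset_of_nonneg (Finset.subset_univ E)
          fun _ _ _ => (Real.exp_pos _).le
  have hmgf : Real.exp (t ^ 2 / 2) ^ F.card ≤ Real.exp (t ^ 2 * n / 2) := by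
    rw [← Real.exp_nat_mul]
    gcongr
    nlinarith [sq_nonneg t]
  have hexp : t ^ 2 * n / 2 - t * a = -(a ^ 2 / (2 * n)) := by
    simp only [t]
    field_simp
    ring
  rw [div_le_iff₀ (by rw [hN]; positivity), ← hexp, Real.exp_sub, hN]
  calc (E.card : ℝ) = E.card * Real.exp (t * a) / Real.exp (t * a) := by field_simp
    _ ≤ 2 * 2 ^ Fintype.card I * Real.exp (t ^ 2 * n / 2) / Real.exp (t * a) := by
        gcongr ?_ / _
        exact hmarkov.trans ((sum_exp_mul_abs_sum_sgn_le F t).trans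
          (mul_le_mul_of_nonneg_left hmgf (by positivity)))
    _ = _ := by ring

end Rademacher

section Link

variable {W : Type*} [DecidableEq W] {X : Finset (Finset W)} {σ τ S T : Finset W}

theorem mem_link : τ ∈ link X σ ↔ Disjoint σ τ ∧ σ ∪ τ ∈ X := by
  constructor
  · intro h
    obtain ⟨ρ, hρ, rfl⟩ := Finset.mem_image.1 h
    rw [Finset.mem_filter] at hρ
    exact ⟨Finset.disjoint_sdiff, by rw [Finset.union_sdiff_of_subset hρ.2]; exact hρ.1⟩
  · rintro ⟨hdisj, hmem⟩
    exact Finset.mem_image.2 ⟨σ ∪ τ, Finset.mem_filter.2 ⟨hmem, Finset.subset_union_left⟩,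
      Finset.union_sdiff_cancel_left hdisj⟩

theorem union_pair_mem_of_mem_pairs {p : W × W} (hp : p ∈ pairs X σ S T) :
    σ ∪ {p.1, p.2} ∈ X ∧ (σ ∪ {p.1, p.2}).card = σ.card + 2 := by
  obtain ⟨-, hne, hlink⟩ := Finset.mem_filter.1 hp
  obtain ⟨hdisj, hmem⟩ := mem_link.1 hlink
  exact ⟨hmem, by rw [Finset.card_union_of_disjoint hdisj, Finset.card_pair hne]⟩

theorem injOn_union_pair_pairs (hST : Disjoint S T) :
    Set.InjOn (fun p : W × W => σ ∪ {p.1, p.2}) (pairs X σ S T) := by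
  intro p hp q hq h
  simp only [pairs, Finset.coe_filter, Finset.mem_product, Set.mem_ofPred_eq] at hp hq
  have hpair : ({p.1, p.2} : Finset W) = {q.1, q.2} := by
    rw [← Finset.union_sdiff_cancel_left (mem_link.1 hp.2.2).1,
      ← Finset.union_sdiff_cancel_left (mem_link.1 hq.2.2).1]
    exact congrArg (· \ σ) h
  have h1 : p.1 ∈ ({q.1, q.2} : Finset W) := hpair ▸ Finset.mem_insert_self _ _
  have h2 : p.2 ∈ ({q.1, q.2} : Finset W) :=
    hpair ▸ Finset.mem_insert_of_mem (Finset.mem_singleton_self _)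
  simp only [Finset.mem_insert, Finset.mem_singleton] at h1 h2
  have := Finset.disjoint_left.1 hST
  rcases h1 with h1 | h1
  · rcases h2 with h2 | h2
    · exact (this (by rw [h2]; exact hq.1.1) hp.1.2).elim
    · exact Prod.ext h1 h2
  · exact (this hp.1.1 (by rw [h1]; exact hq.1.2)).elim

theorem card_pairs_le {k : ℕ} {d : ℕ → ℕ} (hreg : Regular X k d) (hσ : σ.card < k)
    (hT : ∀ t ∈ T, {t} ∈ link X σ) (hST : Disjoint S T) :
    (pairs X σ S T).card ≤ d σ.card * T.card := by
  rw [Finset.card_eq_sum_card_fiberwise (s := pairs X σ S T) (f := Prod.snd) (t := T)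
      fun p hp => (Finset.mem_product.1 (Finset.mem_filter.1 hp).1).2,
    mul_comm, ← smul_eq_mul, ← Finset.sum_const]
  refine Finset.sum_le_sum fun t ht => ?_
  obtain ⟨hσt, hmem⟩ := mem_link.1 (hT t ht)
  have hcard : (σ ∪ {t}).card = σ.card + 1 := by
    rw [Finset.card_union_of_disjoint hσt, Finset.card_singleton]
  calc _ ≤ (X.filter fun τ => σ ∪ {t} ⊆ τ ∧ τ.card = (σ ∪ {t}).card + 1).card := by
        refine Finset.card_le_card_of_injOn _ (fun p hp => ?_)
          ((injOn_union_pair_pairs hST).mono (Finset.coe_subset.2 (Finset.filter_subset _ _)))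
        obtain ⟨hpP, rfl⟩ := Finset.mem_filter.1 hp
        obtain ⟨hmem', hcard'⟩ := union_pair_mem_of_mem_pairs hpP
        exact Finset.mem_filter.2
          ⟨hmem', Finset.union_subset_union_right (by simp), by rw [hcard', hcard]⟩
    -- `Regular` speaks of `deg` with classical decidability, whence `convert`
    _ = d σ.card := by rw [← hreg σ.card hσ _ hmem hcard]; unfold deg; convert rfl

end Link

section LinkFaces

variable {V : Type*} [Fintype V] [DecidableEq V] {X : Finset (Finset V)} {k : ℕ}
  {σ S T : Finset V}

variable (X k σ S T) in
def linkFaces : Finset (TopFaces X k) :=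
  Finset.univ.filter fun τ => τ.1 ∈ (pairs X σ S T).image fun p => σ ∪ {p.1, p.2}

theorem card_linkFaces_le : (linkFaces X k σ S T).card ≤ (pairs X σ S T).card :=
  calc _ ≤ ((pairs X σ S T).image fun p => σ ∪ {p.1, p.2}).card :=
        Finset.card_le_card_of_injOn Subtype.val (fun _ hτ => (Finset.mem_filter.1 hτ).2)
          Subtype.val_injective.injOn
    _ ≤ _ := Finset.card_image_le

theorem innerOmega_eq_sum_linkFaces (hσ : σ.card + 1 = k) (hST : Disjoint S T) (D : ℕ)
    (ω : TopFaces X k → Bool) :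
    innerOmega X k σ D S T ω = (∑ τ ∈ linkFaces X k σ S T, (sgn (ω τ) : ℝ)) / D := by
  rw [innerOmega,
    ← Finset.sum_image (f := fun τ => (fval X k ω τ : ℝ)) (injOn_union_pair_pairs hST)]
  congr 1
  symm
  refine Finset.sum_bij (fun τ _ => τ.1) (fun τ hτ => (Finset.mem_filter.1 hτ).2)
    (fun _ _ _ _ => Subtype.ext) (fun x hx => ?_) (fun τ _ => by rw [fval, dif_pos τ.2]; rfl)
  obtain ⟨p, hp, rfl⟩ := Finset.mem_image.1 hx
  obtain ⟨hmem, hcard⟩ := union_pair_mem_of_mem_pairs hp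
  exact ⟨⟨_, hmem, by omega⟩, Finset.mem_filter.2 ⟨Finset.mem_univ _, hx⟩, rfl⟩

theorem card_lt_abs_innerOmega_div_le {d : ℕ → ℕ} {D : ℕ} (hD : 0 < D) {a : ℝ} (ha : 0 ≤ a)
    (hreg : Regular X k d) (hσ : σ.card + 1 = k) (hT : ∀ t ∈ T, {t} ∈ link X σ)
    (hST : Disjoint S T) :
    ((Finset.univ.filter fun ω : TopFaces X k → Bool => a < |innerOmega X k σ D S T ω|).card
        : ℝ) / Fintype.card (TopFaces X k → Bool) ≤
      2 * Real.exp (-((a * D) ^ 2 / (2 * ((d σ.card : ℝ) * T.card)))) := by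
  have hevent : (Finset.univ.filter fun ω => a < |innerOmega X k σ D S T ω|) =
      Finset.univ.filter fun ω => a * D < |∑ τ ∈ linkFaces X k σ S T, (sgn (ω τ) : ℝ)| :=
    Finset.filter_congr fun ω _ => by
      rw [innerOmega_eq_sum_linkFaces hσ hST, abs_div, Nat.abs_cast,
        lt_div_iff₀ (by exact_mod_cast hD)]
  rw [hevent]
  exact card_lt_abs_sum_sgn_div_le _ (by positivity)
    (by exact_mod_cast card_linkFaces_le.trans (card_pairs_le hreg (by omega) hT hST))

end LinkFaces

theorem sq_mul_log_mul_add_le {D s t κ : ℝ} (hD : 2 ≤ D) (ht : 0 < t) (hts : t ≤ s) :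
    25 * κ ^ 2 * Real.log D * (s + t) ≤
      (10 * √(κ ^ 2 * Real.logb 2 D / D * (s * t)) * D) ^ 2 / (2 * (D * t)) := by
  have hlog : 0 ≤ Real.log D := Real.log_nonneg (by linarith)
  have hlogb : Real.log D ≤ Real.logb 2 D := by
    rw [Real.logb, le_div_iff₀ (Real.log_pos one_lt_two)]
    nlinarith [Real.log_two_lt_d9]
  have hrad : 0 ≤ κ ^ 2 * Real.logb 2 D / D * (s * t) :=
    mul_nonneg (div_nonneg (mul_nonneg (sq_nonneg κ) (hlog.trans hlogb)) (by linarith))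
      (mul_nonneg (by linarith) ht.le)
  calc 25 * κ ^ 2 * Real.log D * (s + t) ≤ 25 * κ ^ 2 * Real.log D * (2 * s) := by
        gcongr; linarith
    _ = 50 * κ ^ 2 * Real.log D * s := by ring
    _ ≤ 50 * κ ^ 2 * Real.logb 2 D * s := by gcongr; linarith
    _ = _ := by
        rw [mul_pow, mul_pow, Real.sq_sqrt hrad]
        field_simp
        ring

theorem two_mul_exp_neg_le_rpow {D κ u : ℝ} (hD : 2 ≤ D) (hκ : 1 ≤ κ) (hu : 1 ≤ u) :
    2 * Real.exp (-(25 * κ ^ 2 * Real.log D * u)) ≤ D ^ (-(10 * u * κ ^ 2)) := by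
  have hlog2 : Real.log 2 ≤ Real.log D := Real.log_le_log two_pos hD
  have hlog : Real.log D ≤ κ ^ 2 * u * Real.log D :=
    le_mul_of_one_le_left (hlog2.trans' (Real.log_nonneg one_le_two)) (by nlinarith)
  rw [Real.rpow_def_of_pos (by linarith), ← Real.exp_log two_pos, ← Real.exp_add,
    Real.exp_le_exp]
  nlinarith [Real.log_nonneg one_le_two]

theorem bad_event_prob_general {V : Type*} [Fintype V] [DecidableEq V]
    (k : ℕ) (hk : 2 ≤ k) (X : Finset (Finset V))
    (d : ℕ → ℕ) (hreg : Regular X k d) (hd : 2 ≤ d (k - 1))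
    (σ : Finset V) (hσcard : σ.card = k - 1)
    (S T : Finset V) (hS : ∀ v ∈ S ∪ T, ({v} : Finset V) ∈ link X σ)
    (hdisj : Disjoint S T) (hbig : T.card ≤ S.card) (hne : (S ∪ T).Nonempty) :
    ((Finset.univ.filter (fun ω : TopFaces X k → Bool =>
        10 * Real.sqrt (((k : ℝ) ^ 2 * Real.logb 2 (d (k - 1)) / (d (k - 1))) *
          ((S.card : ℝ) * (T.card : ℝ))) <
        |innerOmega X k σ (d (k - 1)) S T ω|)).card : ℝ) /
      (Fintype.card (TopFaces X k → Bool) : ℝ) ≤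
      2 * Real.exp (-(25 * (k : ℝ) ^ 2 * Real.log (d (k - 1)) * ((S ∪ T).card : ℝ))) ∧
    2 * Real.exp (-(25 * (k : ℝ) ^ 2 * Real.log (d (k - 1)) * ((S ∪ T).card : ℝ))) ≤
      ((d (k - 1) : ℝ)) ^ (-(10 * ((S ∪ T).card : ℝ) * (k : ℝ) ^ 2)) := by
  have hσ : σ.card + 1 = k := by omega
  have hD : (2 : ℝ) ≤ d (k - 1) := by exact_mod_cast hd
  refine ⟨?_, two_mul_exp_neg_le_rpow hD (by exact_mod_cast (by omega : 1 ≤ k))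
    (by exact_mod_cast hne.card_pos)⟩
  rcases T.eq_empty_or_nonempty with rfl | hT
  · simp [innerOmega, pairs, Real.exp_nonneg]
  refine (card_lt_abs_innerOmega_div_le (by omega) (by positivity) hreg hσ
    (fun t ht => hS t (Finset.mem_union_right S ht)) hdisj).trans ?_
  rw [hσcard, Finset.card_union_of_disjoint hdisj, Nat.cast_add]
  gcongr
  exact sq_mul_log_mul_add_le hD (by exact_mod_cast hT.card_pos) (by exact_mod_cast hbig)

/-- Hoeffding bound for one bad event: for a `(k-2)`-face `σ` and
disjoint `S, T ⊆ X_σ(0)` with `|S| ≥ |T|`, under i.i.d. uniform ±1 signs on the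
`k`-faces, the probability that
`|⟨1_S, A_σ^{f_σ} 1_T⟩| > 10√((k² log d_{k-1}/d_{k-1})|S||T|)` is at most
`2·exp(−25k²(ln d_{k-1})|S∪T|) ≤ d_{k-1}^{−10|S∪T|k²}`. -/
theorem bad_event_prob {V : Type*} [Fintype V] [DecidableEq V]
    (k : ℕ) (hk : 2 ≤ k) (X : Finset (Finset V)) (hdc : DownwardClosed X)
    (hpure : Pure X k) (d : ℕ → ℕ) (hreg : Regular X k d) (hd : 2 ≤ d (k - 1))
    (σ : Finset V) (hσ : σ ∈ X) (hσcard : σ.card = k - 1)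
    (S T : Finset V) (hS : ∀ v ∈ S ∪ T, ({v} : Finset V) ∈ link X σ)
    (hdisj : Disjoint S T) (hbig : T.card ≤ S.card) (hne : (S ∪ T).Nonempty) :
    ((Finset.univ.filter (fun ω : TopFaces X k → Bool =>
        10 * Real.sqrt (((k : ℝ) ^ 2 * Real.logb 2 (d (k - 1)) / (d (k - 1))) *
          ((S.card : ℝ) * (T.card : ℝ))) <
        |innerOmega X k σ (d (k - 1)) S T ω|)).card : ℝ) /
      (Fintype.card (TopFaces X k → Bool) : ℝ) ≤
      2 * Real.exp (-(25 * (k : ℝ) ^ 2 * Real.log (d (k - 1)) * ((S ∪ T).card : ℝ))) ∧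
    2 * Real.exp (-(25 * (k : ℝ) ^ 2 * Real.log (d (k - 1)) * ((S ∪ T).card : ℝ))) ≤
      ((d (k - 1) : ℝ)) ^ (-(10 * ((S ∪ T).card : ℝ) * (k : ℝ) ^ 2)) :=
  bad_event_prob_general k hk X d hreg hd σ hσcard S T hS hdisj hbig hne

end HDX
end
end
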